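/- For any measurable sets A and B, the following are equivalent: μ(A ∩ P(B)) = 0; μ(F(A) ∩ P(B)) = 0; μ(F(A) ∩ B) = 0. -/

import Mathlib

/-
The complement of an invariant set is co-invariant and vice versa, and `μ (S ∩ U) = 0` says
`S ⊆ Uᶜ` a.e. Since `P(B)ᶜ` is invariant, minimality of `F(A)` gives `A ⊆ P(B)ᶜ ↔ F(A) ⊆ P(B)ᶜ`;
since `F(A)ᶜ` is co-invariant, minimality of `P(B)` gives `B ⊆ F(A)ᶜ ↔ P(B) ⊆ F(A)ᶜ`.
-/

open MeasureTheory ENNReal Filter Set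

noncomputable section

namespace PaperAtoms

variable {Ω : Type*} [MeasurableSpace Ω] {μ : MeasureTheory.Measure Ω} {p : ℝ≥0∞} [Fact (1 ≤ p)]

/-- `T` is a positive operator on `Lp`. -/
def IsPositiveOp (T : Lp ℝ p μ →L[ℝ] Lp ℝ p μ) : Prop :=
  ∀ f : Lp ℝ p μ, 0 ≤ f → 0 ≤ T f

/-- A measurable set `A` is `T`-invariant if `T f` vanishes a.e. on `Aᶜ` for every
nonnegative `f ∈ Lp` vanishing a.e. on `Aᶜ`. -/
def Invariant (T : Lp ℝ p μ →L[ℝ] Lp ℝ p μ) (A : Set Ω) : Prop :=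
  MeasurableSet A ∧
    ∀ f : Lp ℝ p μ, 0 ≤ f → (∀ᵐ x ∂μ, x ∉ A → f x = 0) → ∀ᵐ x ∂μ, x ∉ A → T f x = 0

/-- `A` is `T`-co-invariant if `Aᶜ` is `T`-invariant. -/
def CoInvariant (T : Lp ℝ p μ →L[ℝ] Lp ℝ p μ) (A : Set Ω) : Prop :=
  Invariant T Aᶜ

/-- `A` is `T`-admissible if it belongs to the σ-field generated by the `T`-invariant sets. -/
def Admissible (T : Lp ℝ p μ →L[ℝ] Lp ℝ p μ) (A : Set Ω) : Prop :=
  MeasurableSet[MeasurableSpace.generateFrom {B : Set Ω | Invariant T B}] A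

/-- A `T`-atom is a minimal `T`-admissible set with positive measure. -/
def Atom (T : Lp ℝ p μ →L[ℝ] Lp ℝ p μ) (A : Set Ω) : Prop :=
  Admissible T A ∧ 0 < μ A ∧
    ∀ B : Set Ω, Admissible T B → B ≤ᵐ[μ] A → μ B = 0 ∨ B =ᵐ[μ] A

/-- `FA` is (a version of) the future of `A`: the minimal `T`-invariant set containing `A` a.e. -/
def IsFuture (T : Lp ℝ p μ →L[ℝ] Lp ℝ p μ) (A FA : Set Ω) : Prop :=
  Invariant T FA ∧ A ≤ᵐ[μ] FA ∧
    ∀ B : Set Ω, Invariant T B → A ≤ᵐ[μ] B → FA ≤ᵐ[μ] B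

/-- `PA` is (a version of) the past of `A`: the minimal `T`-co-invariant set containing `A` a.e. -/
def IsPast (T : Lp ℝ p μ →L[ℝ] Lp ℝ p μ) (A PA : Set Ω) : Prop :=
  CoInvariant T PA ∧ A ≤ᵐ[μ] PA ∧
    ∀ B : Set Ω, CoInvariant T B → A ≤ᵐ[μ] B → PA ≤ᵐ[μ] B

/-- `A` is `T`-convex if `A = F(A) ∩ P(A)` a.e. -/
def Convexe (T : Lp ℝ p μ →L[ℝ] Lp ℝ p μ) (A : Set Ω) : Prop :=
  MeasurableSet A ∧
    ∃ FA PA : Set Ω, IsFuture T A FA ∧ IsPast T A PA ∧ A =ᵐ[μ] (FA ∩ PA : Set Ω)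

/-- Multiplication by the indicator function of `A`, as a bounded operator on `Lp`
(defined as `0` if `A` is not measurable). -/
def indicatorCLM (μ : MeasureTheory.Measure Ω) (p : ℝ≥0∞) [Fact (1 ≤ p)] (A : Set Ω) :
    Lp ℝ p μ →L[ℝ] Lp ℝ p μ := by
  classical
  exact if hA : MeasurableSet A then
    LinearMap.mkContinuous
      { toFun := fun f => ((Lp.memLp f).indicator hA).toLp (A.indicator f)
        map_add' := fun f g => by
          rw [← MemLp.toLp_add]
          refine MemLp.toLp_congr _ _ ?_
          filter_upwards [Lp.coeFn_add f g] with x hx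
          simp only [Pi.add_apply, Set.indicator_apply, hx]
          split <;> simp
        map_smul' := fun c f => by
          rw [RingHom.id_apply, ← MemLp.toLp_const_smul]
          apply MemLp.toLp_congr
          filter_upwards [Lp.coeFn_smul c f] with x hx
          simp only [Pi.smul_apply, Set.indicator_apply, hx, smul_eq_mul]
          split <;> simp }
      1
      (fun f => by
        simp only [LinearMap.coe_mk, AddHom.coe_mk, one_mul]
        rw [Lp.norm_toLp, Lp.norm_def]
        exact ENNReal.toReal_mono (Lp.eLpNorm_ne_top f) (eLpNorm_indicator_le _))
  else 0

/-- The restriction `T_A = 1_A T 1_A` of `T` to a measurable set `A`. -/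
def restrictOp (T : Lp ℝ p μ →L[ℝ] Lp ℝ p μ) (A : Set Ω) : Lp ℝ p μ →L[ℝ] Lp ℝ p μ :=
  (indicatorCLM μ p A).comp (T.comp (indicatorCLM μ p A))

/-- The spectral radius of a bounded operator, via Gelfand's formula
`ρ(T) = inf_n ‖Tⁿ‖^(1/n) = lim_n ‖Tⁿ‖^(1/n)`. -/
def specRadius (T : Lp ℝ p μ →L[ℝ] Lp ℝ p μ) : ℝ :=
  ⨅ n : ℕ, ‖T ^ (n + 1)‖ ^ (((n : ℝ) + 1)⁻¹)

/-- The spectral radius `ρ(A)` of the restriction of `T` to `A`. -/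
def rhoSet (T : Lp ℝ p μ →L[ℝ] Lp ℝ p μ) (A : Set Ω) : ℝ :=
  specRadius (restrictOp T A)

/-- A measurable set `A` with `μ A > 0` is `T`-irreducible if the restriction of `T` to `A`
is irreducible, i.e. every `T_A`-invariant subset of `A` is a.e. trivial. -/
def Irreducible (T : Lp ℝ p μ →L[ℝ] Lp ℝ p μ) (A : Set Ω) : Prop :=
  MeasurableSet A ∧ 0 < μ A ∧
    ∀ B : Set Ω, Invariant (restrictOp T A) B → B ≤ᵐ[μ] A → μ B = 0 ∨ B =ᵐ[μ] A

/-- `T` is power compact if some power `T^k`, `k ≥ 1`, is a compact operator. -/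
def PowerCompact (T : Lp ℝ p μ →L[ℝ] Lp ℝ p μ) : Prop :=
  ∃ k : ℕ, 1 ≤ k ∧ IsCompactOperator (⇑(T ^ k))

/-- `B ≼ A` for atoms: `B ⊆ F(A)` a.e. -/
def Prec (T : Lp ℝ p μ →L[ℝ] Lp ℝ p μ) (B A : Set Ω) : Prop :=
  ∃ FA : Set Ω, IsFuture T A FA ∧ B ≤ᵐ[μ] FA

/-- `B ≺ A` for atoms: `B ⊆ F(A)` a.e. and `B ≠ A` a.e. -/
def PrecStrict (T : Lp ℝ p μ →L[ℝ] Lp ℝ p μ) (B A : Set Ω) : Prop :=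
  Prec T B A ∧ ¬ (B =ᵐ[μ] A)

/-- A critical atom: a `T`-atom whose spectral radius equals that of `T`. -/
def CriticalAtom (T : Lp ℝ p μ →L[ℝ] Lp ℝ p μ) (A : Set Ω) : Prop :=
  Atom T A ∧ rhoSet T A = specRadius T

/-- There is a chain `A = A_0 ≻ A_1 ≻ ⋯ ≻ A_n` of critical atoms starting at `A`. -/
def ChainFrom (T : Lp ℝ p μ →L[ℝ] Lp ℝ p μ) (A : Set Ω) (n : ℕ) : Prop :=
  ∃ c : ℕ → Set Ω, c 0 = A ∧ (∀ i ≤ n, CriticalAtom T (c i)) ∧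
    ∀ i < n, PrecStrict T (c (i + 1)) (c i)

/-- The generalized eigenspace `⋃ₖ ker (T - λ id)^k` of `T` at `λ`. -/
def genEigenspace (T : Lp ℝ p μ →L[ℝ] Lp ℝ p μ) (l : ℝ) : Submodule ℝ (Lp ℝ p μ) :=
  ⨆ k : ℕ, LinearMap.ker (((T - l • (1 : Lp ℝ p μ →L[ℝ] Lp ℝ p μ)) ^ k : Lp ℝ p μ →L[ℝ] Lp ℝ p μ) :
      Lp ℝ p μ →ₗ[ℝ] Lp ℝ p μ)

/-- The algebraic multiplicity of `λ` for `T`. -/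
def algMult (T : Lp ℝ p μ →L[ℝ] Lp ℝ p μ) (l : ℝ) : ℕ :=
  Module.finrank ℝ ↥(genEigenspace T l)

/-- The set of `k` at which the kernels of `(T - ρ(T) id)^k` stabilize; the ascent of `T`
at `ρ(T)` is its infimum. -/
def ascentSet (T : Lp ℝ p μ →L[ℝ] Lp ℝ p μ) : Set ℕ :=
  {k : ℕ | LinearMap.ker (((T - specRadius T • (1 : Lp ℝ p μ →L[ℝ] Lp ℝ p μ)) ^ k :
      Lp ℝ p μ →L[ℝ] Lp ℝ p μ) : Lp ℝ p μ →ₗ[ℝ] Lp ℝ p μ)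
      = LinearMap.ker (((T - specRadius T • (1 : Lp ℝ p μ →L[ℝ] Lp ℝ p μ)) ^ (k + 1) :
      Lp ℝ p μ →L[ℝ] Lp ℝ p μ) : Lp ℝ p μ →ₗ[ℝ] Lp ℝ p μ)}

/-- `D` is (a version of) the set `T(C)`, i.e. the support of `T(1_C f)` for any a.e.
positive `f ∈ Lp`. -/
def IsImage (T : Lp ℝ p μ →L[ℝ] Lp ℝ p μ) (C D : Set Ω) : Prop :=
  MeasurableSet C ∧ MeasurableSet D ∧
    ∀ f : Lp ℝ p μ, (∀ᵐ x ∂μ, 0 < f x) →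
      D =ᵐ[μ] ({x | T (indicatorCLM μ p C f) x ≠ 0} : Set Ω)

/-- `D` is (a version of) the `k`-fold iterated image `T^k(C)`. -/
def IsIterImage (T : Lp ℝ p μ →L[ℝ] Lp ℝ p μ) : ℕ → Set Ω → Set Ω → Prop
  | 0, C, D => D = C
  | (k + 1), C, D => ∃ E : Set Ω, IsIterImage T k C E ∧ IsImage T E D

theorem Invariant.coInvariant_compl {T : Lp ℝ p μ →L[ℝ] Lp ℝ p μ} {A : Set Ω}
    (hA : Invariant T A) : CoInvariant T Aᶜ := by
  rwa [CoInvariant, compl_compl]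

theorem IsFuture.measure_inter_eq_zero_iff {T : Lp ℝ p μ →L[ℝ] Lp ℝ p μ} {A FA U : Set Ω}
    (hFA : IsFuture T A FA) (hU : CoInvariant T U) : μ (A ∩ U) = 0 ↔ μ (FA ∩ U) = 0 := by
  simp only [← sdiff_compl, ← ae_le_set]
  exact ⟨hFA.2.2 Uᶜ hU, hFA.2.1.trans⟩

theorem IsPast.measure_inter_eq_zero_iff {T : Lp ℝ p μ →L[ℝ] Lp ℝ p μ} {B PB V : Set Ω}
    (hPB : IsPast T B PB) (hV : Invariant T V) : μ (V ∩ PB) = 0 ↔ μ (V ∩ B) = 0 := by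
  simp only [inter_comm V, ← sdiff_compl, ← ae_le_set]
  exact ⟨hPB.2.1.trans, hPB.2.2 Vᶜ hV.coInvariant_compl⟩

variable {Ω : Type*} [MeasurableSpace Ω] {μ : MeasureTheory.Measure Ω} {p : ℝ≥0∞}

theorem statement11_general [Fact (1 ≤ p)]
    (T : Lp ℝ p μ →L[ℝ] Lp ℝ p μ) (A B : Set Ω)
    (FA PB : Set Ω) (hFA : IsFuture T A FA) (hPB : IsPast T B PB) :
    (μ (A ∩ PB) = 0 ↔ μ (FA ∩ PB) = 0) ∧ (μ (FA ∩ PB) = 0 ↔ μ (FA ∩ B) = 0) :=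
  ⟨hFA.measure_inter_eq_zero_iff hPB.1, hPB.measure_inter_eq_zero_iff hFA.1⟩

theorem statement11 [SigmaFinite μ] (hμ : μ Set.univ ≠ 0) [Fact (1 ≤ p)]
    (hp : 1 < p) (hp' : p ≠ ∞)
    (T : Lp ℝ p μ →L[ℝ] Lp ℝ p μ) (hT : IsPositiveOp T)
    (A B : Set Ω) (hA : MeasurableSet A) (hB : MeasurableSet B)
    (FA PB : Set Ω) (hFA : IsFuture T A FA) (hPB : IsPast T B PB) :
    (μ (A ∩ PB) = 0 ↔ μ (FA ∩ PB) = 0) ∧ (μ (FA ∩ PB) = 0 ↔ μ (FA ∩ B) = 0) :=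
  statement11_general T A B FA PB hFA hPB

end PaperAtoms
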